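/- arXiv:1112.4124 — 4 statements merged into one kernel-verified Lean document; each statement's English description precedes it below -/
import Mathlib

section
/- Let c0, k, Y > 0 and let f be a bounded measurable function on [0,∞). The function φ⁺(y) = 2 ∫₀^∞ exp(-(c0 ξ² + 2 k Y ξ)) ( ∫_ξ^{ξ+y} f(ζ) exp(-2 c0 ξ (ζ - ξ)) dζ ) dξ satisfies, for y > 0, the ODE -(1/2) φ⁺''(y) + (c0 y + k Y) φ⁺'(y) = f(y), with φ⁺(0) = 0 (assuming f is continuous so the ODE holds classically). -/
open MeasureTheory Real Set

/-!
With `w(ζ) = exp (-(c0 ζ² + b ζ))`, `b = 2kY`, substitute `ζ = ξ + u` in the inner integral and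
swap the two integrations (the integrand is dominated by `M w(ξ)` on `(0,∞) × (0,y]`). Completing
the square, `w(ξ) exp (-2 c0 ξ u) = w(ξ + u) / w(u)`, so the `ξ`-integral is the Gaussian tail
`g(u) = w(u)⁻¹ ∫_u^∞ w f`, and `φ(y) = 2 ∫_0^y g`. Since `(w g)' = -w f`, the tail satisfies
`g' = (2 c0 u + b) g - f`, and then `-(1/2) φ'' + (c0 y + kY) φ' = -g' + (2 c0 y + b) g = f`.
-/

section GaussianTail

variable {c b M : ℝ} {f : ℝ → ℝ}

theorem integrable_exp_neg_quadratic (hc : 0 < c) (b : ℝ) :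
    Integrable fun x : ℝ => exp (-(c * x ^ 2 + b * x)) := by
  have hshift := ((integrable_exp_neg_mul_sq hc).comp_add_right (b / (2 * c))).const_mul
    (exp (b ^ 2 / (4 * c)))
  refine hshift.congr (Filter.Eventually.of_forall fun x => ?_)
  simp only [← exp_add]
  congr 1
  field_simp
  ring

theorem integrable_exp_neg_quadratic_mul (hc : 0 < c) (b : ℝ) (hf : Continuous f)
    (hM : ∀ x, |f x| ≤ M) :
    Integrable fun x : ℝ => exp (-(c * x ^ 2 + b * x)) * f x :=
  (integrable_exp_neg_quadratic hc b).mul_bdd hf.aestronglyMeasurable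
    (Filter.Eventually.of_forall hM)

theorem hasDerivAt_integral_Ioi {h : ℝ → ℝ} (hi : Integrable h) (hh : Continuous h) (u : ℝ) :
    HasDerivAt (fun v => ∫ x in Ioi v, h x) (-h u) u := by
  have htail : (fun v => ∫ x in Ioi v, h x) = fun v => (∫ x in Ioi 0, h x) - ∫ x in 0..v, h x :=
    funext fun v => by
      rw [← intervalIntegral.integral_Ioi_sub_Ioi' hi.integrableOn hi.integrableOn,
        sub_sub_cancel]
  rw [htail]
  exact ((hh.integral_hasStrictDerivAt 0 u).hasDerivAt).const_sub _

theorem setIntegral_Ioi_zero_comp_add_right (F : ℝ → ℝ) (u : ℝ) :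
    ∫ ξ in Ioi (0 : ℝ), F (ξ + u) = ∫ ζ in Ioi u, F ζ := by
  have hmap := (measurableEmbedding_addRight u).setIntegral_map (μ := volume) F (Ioi u)
  rw [map_add_right_eq_self volume u] at hmap
  rw [hmap, show (fun x => x + u) ⁻¹' Ioi u = Ioi (0 : ℝ) by rw [preimage_add_const_Ioi, sub_self]]

variable (c b f) in
noncomputable def gaussianTail (u : ℝ) : ℝ :=
  exp (c * u ^ 2 + b * u) * ∫ ζ in Ioi u, exp (-(c * ζ ^ 2 + b * ζ)) * f ζ

variable (c b f) in
theorem gaussianTail_eq_integral (u : ℝ) :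
    gaussianTail c b f u =
      ∫ ξ in Ioi (0 : ℝ), exp (-(c * ξ ^ 2 + b * ξ + 2 * c * ξ * u)) * f (u + ξ) := by
  have hsquare : ∀ ξ : ℝ, exp (-(c * ξ ^ 2 + b * ξ + 2 * c * ξ * u)) * f (u + ξ) =
      exp (c * u ^ 2 + b * u) * (exp (-(c * (ξ + u) ^ 2 + b * (ξ + u))) * f (ξ + u)) := by
    intro ξ
    rw [add_comm u ξ, ← mul_assoc, ← exp_add]
    congr 2
    ring
  simp_rw [hsquare]
  rw [setIntegral_Ioi_zero_comp_add_right
    (fun ζ => exp (c * u ^ 2 + b * u) * (exp (-(c * ζ ^ 2 + b * ζ)) * f ζ)) u,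
    integral_const_mul, gaussianTail]

theorem hasDerivAt_gaussianTail (hc : 0 < c) (hf : Continuous f) (hM : ∀ x, |f x| ≤ M) (z : ℝ) :
    HasDerivAt (gaussianTail c b f) ((2 * c * z + b) * gaussianTail c b f z - f z) z := by
  have hquad : HasDerivAt (fun u : ℝ => c * u ^ 2 + b * u) (2 * c * z + b) z := by
    refine (((hasDerivAt_pow 2 z).const_mul c).add ((hasDerivAt_id z).const_mul b)).congr_deriv ?_
    simp only [Nat.cast_ofNat]
    ring
  have htail := hasDerivAt_integral_Ioi (integrable_exp_neg_quadratic_mul hc b hf hM)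
    ((continuous_exp.comp (by fun_prop)).mul hf) z
  refine (hquad.exp.mul htail).congr_deriv ?_
  have hcancel : exp (c * z ^ 2 + b * z) * exp (-(c * z ^ 2 + b * z)) = 1 := by
    rw [← exp_add, add_neg_cancel, exp_zero]
  rw [gaussianTail]
  linear_combination (-f z) * hcancel

theorem integrable_gaussianKernel_prod (hc : 0 < c) (hf : Continuous f) (hM : ∀ x, |f x| ≤ M)
    (y : ℝ) :
    Integrable (Function.uncurry fun ξ u : ℝ => exp (-(c * ξ ^ 2 + b * ξ + 2 * c * ξ * u)) *
      f (u + ξ)) ((volume.restrict (Ioi 0)).prod (volume.restrict (Ioc 0 y))) := by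
  have hdom : Integrable (fun p : ℝ × ℝ => M * exp (-(c * p.1 ^ 2 + b * p.1)) * 1)
      ((volume.restrict (Ioi 0)).prod (volume.restrict (Ioc 0 y))) :=
    Integrable.mul_prod ((integrable_exp_neg_quadratic hc b).const_mul M).restrict
      (integrableOn_const measure_Ioc_lt_top.ne)
  refine hdom.mono' ((continuous_exp.comp (by fun_prop)).mul
    (hf.comp (by fun_prop))).aestronglyMeasurable ?_
  rw [Measure.prod_restrict, ae_restrict_iff' (measurableSet_Ioi.prod measurableSet_Ioc)]
  refine Filter.Eventually.of_forall fun ⟨ξ, u⟩ ⟨(hξ : 0 < ξ), hu⟩ => ?_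
  have hexp : exp (-(c * ξ ^ 2 + b * ξ + 2 * c * ξ * u)) ≤ exp (-(c * ξ ^ 2 + b * ξ)) :=
    exp_le_exp.2 (by nlinarith [mul_pos (mul_pos hc hξ) hu.1])
  simp only [Function.uncurry_apply_pair, norm_mul, norm_eq_abs, abs_exp, mul_one]
  rw [mul_comm M]
  exact mul_le_mul hexp (hM _) (abs_nonneg _) (exp_pos _).le

theorem integral_exp_mul_intervalIntegral_eq (hc : 0 < c) (hf : Continuous f)
    (hM : ∀ x, |f x| ≤ M) {y : ℝ} (hy : 0 ≤ y) :
    ∫ ξ in Ioi (0 : ℝ), exp (-(c * ξ ^ 2 + b * ξ)) *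
        ∫ ζ in ξ..(ξ + y), f ζ * exp (-2 * c * ξ * (ζ - ξ)) =
      ∫ u in (0 : ℝ)..y, gaussianTail c b f u := by
  have hshift : ∀ ξ : ℝ, exp (-(c * ξ ^ 2 + b * ξ)) *
        (∫ ζ in ξ..(ξ + y), f ζ * exp (-2 * c * ξ * (ζ - ξ))) =
      ∫ u in Ioc 0 y, exp (-(c * ξ ^ 2 + b * ξ + 2 * c * ξ * u)) * f (u + ξ) := by
    intro ξ
    have hsub := intervalIntegral.integral_comp_add_right (a := 0) (b := y)
      (fun ζ => f ζ * exp (-2 * c * ξ * (ζ - ξ))) ξ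
    rw [zero_add, add_comm y] at hsub
    rw [← hsub, intervalIntegral.integral_of_le hy, ← integral_const_mul]
    refine setIntegral_congr_fun measurableSet_Ioc fun u _ => ?_
    rw [add_sub_cancel_right, mul_left_comm, ← exp_add]
    ring_nf
  simp_rw [hshift]
  rw [integral_integral_swap (integrable_gaussianKernel_prod hc hf hM y),
    intervalIntegral.integral_of_le hy]
  simp_rw [gaussianTail_eq_integral]

end GaussianTail

theorem stmt0_general (c0 k Y : ℝ) (hc0 : 0 < c0)
    (f : ℝ → ℝ) (hf_cont : Continuous f) (hf_bdd : ∃ M, ∀ y, |f y| ≤ M)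
    (φ : ℝ → ℝ)
    (hφ : ∀ y, φ y =
      2 * ∫ ξ in Ioi (0 : ℝ),
        Real.exp (-(c0 * ξ ^ 2 + 2 * k * Y * ξ)) *
          ∫ ζ in ξ..(ξ + y), f ζ * Real.exp (-2 * c0 * ξ * (ζ - ξ))) :
    (∀ y, 0 < y →
      -(1 / 2) * deriv (deriv φ) y + (c0 * y + k * Y) * deriv φ y = f y) ∧
    φ 0 = 0 := by
  obtain ⟨M, hM⟩ := hf_bdd
  set g := gaussianTail c0 (2 * k * Y) f
  have hg (z : ℝ) := hasDerivAt_gaussianTail (b := 2 * k * Y) hc0 hf_cont hM z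
  have hg_cont : Continuous g := continuous_iff_continuousAt.2 fun z => (hg z).continuousAt
  have hφ' : ∀ t, 0 < t → deriv φ t = 2 * g t := by
    intro t ht
    have hφg : φ =ᶠ[nhds t] fun s => 2 * ∫ u in (0 : ℝ)..s, g u := by
      filter_upwards [isOpen_Ioi.mem_nhds ht] with s (hs : 0 < s)
      rw [hφ, integral_exp_mul_intervalIntegral_eq hc0 hf_cont hM hs.le]
    rw [hφg.deriv_eq]
    exact ((hg_cont.integral_hasStrictDerivAt 0 t).hasDerivAt.const_mul 2).deriv
  refine ⟨fun y hy => ?_, by simp [hφ]⟩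
  have hφ'g : deriv φ =ᶠ[nhds y] fun t => 2 * g t :=
    Filter.eventually_of_mem (isOpen_Ioi.mem_nhds hy) hφ'
  rw [hφ'g.deriv_eq, hφ' y hy, ((hg y).const_mul 2).deriv]
  ring

/-- the explicit double-integral formula
`φ⁺(y) = 2 ∫₀^∞ exp(-(c0 ξ² + 2 k Y ξ)) (∫_ξ^{ξ+y} f(ζ) exp(-2 c0 ξ (ζ - ξ)) dζ) dξ`
solves `-(1/2) φ⁺'' + (c0 y + k Y) φ⁺' = f` for `y > 0`, with `φ⁺(0) = 0`. -/
theorem stmt0 (c0 k Y : ℝ) (hc0 : 0 < c0) (hk : 0 < k) (hY : 0 < Y)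
    (f : ℝ → ℝ) (hf_cont : Continuous f) (hf_bdd : ∃ M, ∀ y, |f y| ≤ M)
    (φ : ℝ → ℝ)
    (hφ : ∀ y, φ y =
      2 * ∫ ξ in Ioi (0 : ℝ),
        Real.exp (-(c0 * ξ ^ 2 + 2 * k * Y * ξ)) *
          ∫ ζ in ξ..(ξ + y), f ζ * Real.exp (-2 * c0 * ξ * (ζ - ξ))) :
    (∀ y, 0 < y →
      -(1 / 2) * deriv (deriv φ) y + (c0 * y + k * Y) * deriv φ y = f y) ∧
    φ 0 = 0 :=
  stmt0_general c0 k Y hc0 f hf_cont hf_bdd φ hφ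
end

section
/- Let c0, k, Y > 0 and let φ⁺(y) = ∫₀^∞ exp(-(c0 ξ² + 2 k Y ξ)) · (1 - exp(-2 c0 y ξ))/(2 c0 ξ) dξ. Then for all y > 0, φ⁺(y) ≤ (1/c0) · log((c0 y + k Y)/(k Y)). -/
open MeasureTheory Real Set

/-!
With `a = 2kY` and `b = 2kY + 2c0y` the integrand is
`e^{-c0ξ²} (2c0)⁻¹ ξ⁻¹ (e^{-aξ} - e^{-bξ})`. Dropping the Gaussian factor `e^{-c0ξ²} ≤ 1` bounds
`φ⁺(y)` by `(2c0)⁻¹` times a Frullani integral, which equals `log (b / a) = log ((c0y + kY)/(kY))`.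
This gives the estimate even with `1/(2c0)` in place of `1/c0`.
-/

lemma inv_mul_exp_neg_sub_exp_neg_le {a b x : ℝ} (hx : 0 < x) :
    x⁻¹ * (exp (-(a * x)) - exp (-(b * x))) ≤ (b - a) * exp (-(a * x)) := by
  have hlin : 1 - (b - a) * x ≤ exp (-((b - a) * x)) := by linarith [add_one_le_exp (-((b - a) * x))]
  have hsplit : exp (-(b * x)) = exp (-(a * x)) * exp (-((b - a) * x)) := by
    rw [← exp_add]; ring_nf
  rw [inv_mul_le_iff₀ hx, hsplit]
  nlinarith [exp_pos (-(a * x))]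

lemma inv_mul_exp_neg_sub_exp_neg_nonneg {a b x : ℝ} (hab : a ≤ b) (hx : 0 ≤ x) :
    0 ≤ x⁻¹ * (exp (-(a * x)) - exp (-(b * x))) :=
  mul_nonneg (inv_nonneg.2 hx) (sub_nonneg.2 (exp_le_exp.2 (by nlinarith)))

lemma integrableOn_inv_mul_exp_neg_sub_exp_neg_of_le {a b : ℝ} (ha : 0 < a) (hab : a ≤ b) :
    IntegrableOn (fun x ↦ x⁻¹ * (exp (-(a * x)) - exp (-(b * x)))) (Ioi 0) := by
  refine Integrable.mono' ((exp_neg_integrableOn_Ioi 0 ha).const_mul (b - a)) ?_ ?_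
  · exact (ContinuousOn.aestronglyMeasurable
      (by fun_prop (disch := intro x hx; exact ne_of_gt hx)) measurableSet_Ioi)
  · filter_upwards [ae_restrict_mem measurableSet_Ioi] with x (hx : 0 < x)
    rw [norm_of_nonneg (inv_mul_exp_neg_sub_exp_neg_nonneg hab hx.le), neg_mul]
    exact inv_mul_exp_neg_sub_exp_neg_le hx

lemma integrableOn_inv_mul_exp_neg_sub_exp_neg {a b : ℝ} (ha : 0 < a) (hb : 0 < b) :
    IntegrableOn (fun x ↦ x⁻¹ * (exp (-(a * x)) - exp (-(b * x)))) (Ioi 0) := by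
  rcases le_total a b with hab | hba
  · exact integrableOn_inv_mul_exp_neg_sub_exp_neg_of_le ha hab
  · refine (integrableOn_inv_mul_exp_neg_sub_exp_neg_of_le hb hba).neg.congr_fun
      (fun x _ ↦ ?_) measurableSet_Ioi
    simp only [Pi.neg_apply]
    ring

lemma integral_inv_mul_exp_neg_sub_exp_neg {a b : ℝ} (ha : 0 < a) (hb : 0 < b) :
    ∫ x in Ioi 0, x⁻¹ * (exp (-(a * x)) - exp (-(b * x))) = log (b / a) := by
  have hf : Continuous fun x : ℝ ↦ exp (-x) := by fun_prop
  have h := Frullani.integral_Ioi_eq (f := fun x ↦ exp (-x)) (L := 1) (R := 0)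
    (hf.locallyIntegrable.locallyIntegrableOn _) ha hb
    (by simpa using (hf.tendsto 0).mono_left nhdsWithin_le_nhds)
    (tendsto_exp_neg_atTop_nhds_zero) (integrableOn_inv_mul_exp_neg_sub_exp_neg ha hb)
  simpa using h

lemma setIntegral_mul_le_of_le_one {α : Type*} [MeasurableSpace α] {μ : Measure α} {s : Set α}
    (hs : MeasurableSet s) {w f : α → ℝ} (hf : IntegrableOn f s μ) (hf0 : ∀ x ∈ s, 0 ≤ f x)
    (hw0 : ∀ x ∈ s, 0 ≤ w x) (hw1 : ∀ x ∈ s, w x ≤ 1) :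
    ∫ x in s, w x * f x ∂μ ≤ ∫ x in s, f x ∂μ := by
  refine integral_mono_of_nonneg ?_ hf ?_ <;> filter_upwards [ae_restrict_mem hs] with x hx
  · exact mul_nonneg (hw0 x hx) (hf0 x hx)
  · exact mul_le_of_le_one_left (hf0 x hx) (hw1 x hx)

lemma exp_neg_quad_mul_one_sub_exp_div_eq {c0 k Y y ξ : ℝ} (hc0 : c0 ≠ 0) (hξ : ξ ≠ 0) :
    exp (-(c0 * ξ ^ 2 + 2 * k * Y * ξ)) * ((1 - exp (-2 * c0 * y * ξ)) / (2 * c0 * ξ)) =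
      exp (-(c0 * ξ ^ 2)) * ((2 * c0)⁻¹ *
        (ξ⁻¹ * (exp (-(2 * k * Y * ξ)) - exp (-((2 * k * Y + 2 * c0 * y) * ξ))))) := by
  have h1 : exp (-(c0 * ξ ^ 2 + 2 * k * Y * ξ)) = exp (-(c0 * ξ ^ 2)) * exp (-(2 * k * Y * ξ)) := by
    rw [← exp_add]; ring_nf
  have h2 : exp (-((2 * k * Y + 2 * c0 * y) * ξ)) = exp (-(2 * k * Y * ξ)) * exp (-2 * c0 * y * ξ) := by
    rw [← exp_add]; ring_nf
  rw [h1, h2]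
  field_simp

/-- logarithmic bound on
`φ⁺(y) = ∫₀^∞ exp(-(c0 ξ² + 2 k Y ξ)) (1 - exp(-2 c0 y ξ))/(2 c0 ξ) dξ`:
for all `y > 0`, `φ⁺(y) ≤ (1/c0) log((c0 y + k Y)/(k Y))`. -/
theorem stmt2 (c0 k Y : ℝ) (hc0 : 0 < c0) (hk : 0 < k) (hY : 0 < Y) :
    ∀ y, 0 < y →
      (∫ ξ in Ioi (0 : ℝ),
        Real.exp (-(c0 * ξ ^ 2 + 2 * k * Y * ξ)) *
          ((1 - Real.exp (-2 * c0 * y * ξ)) / (2 * c0 * ξ)))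
      ≤ (1 / c0) * Real.log ((c0 * y + k * Y) / (k * Y)) := by
  intro y hy
  have ha : 0 < 2 * k * Y := by positivity
  have hab : 2 * k * Y ≤ 2 * k * Y + 2 * c0 * y := by linarith [mul_pos hc0 hy]
  have hlog : log ((2 * k * Y + 2 * c0 * y) / (2 * k * Y)) = log ((c0 * y + k * Y) / (k * Y)) := by
    congr 1; field_simp; ring
  calc _ = ∫ ξ in Ioi (0 : ℝ), exp (-(c0 * ξ ^ 2)) * ((2 * c0)⁻¹ *
        (ξ⁻¹ * (exp (-(2 * k * Y * ξ)) - exp (-((2 * k * Y + 2 * c0 * y) * ξ))))) :=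
        setIntegral_congr_fun measurableSet_Ioi fun ξ hξ ↦
          exp_neg_quad_mul_one_sub_exp_div_eq hc0.ne' (ne_of_gt hξ)
    _ ≤ ∫ ξ in Ioi (0 : ℝ), (2 * c0)⁻¹ *
        (ξ⁻¹ * (exp (-(2 * k * Y * ξ)) - exp (-((2 * k * Y + 2 * c0 * y) * ξ)))) :=
        setIntegral_mul_le_of_le_one measurableSet_Ioi
          ((integrableOn_inv_mul_exp_neg_sub_exp_neg ha (ha.trans_le hab)).const_mul _)
          (fun ξ hξ ↦ mul_nonneg (by positivity)
            (inv_mul_exp_neg_sub_exp_neg_nonneg hab (le_of_lt hξ)))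
          (fun _ _ ↦ (exp_pos _).le)
          (fun ξ _ ↦ exp_le_one_iff.2 (by nlinarith [sq_nonneg ξ]))
    _ = (2 * c0)⁻¹ * log ((c0 * y + k * Y) / (k * Y)) := by
        rw [integral_const_mul, integral_inv_mul_exp_neg_sub_exp_neg ha (ha.trans_le hab), hlog]
    _ ≤ (1 / c0) * log ((c0 * y + k * Y) / (k * Y)) := by
        refine mul_le_mul_of_nonneg_right ?_ (log_nonneg ?_)
        · rw [one_div]; exact inv_anti₀ hc0 (by linarith)
        · rw [le_div_iff₀ (by positivity)]; linarith [mul_pos hc0 hy]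
end

section
/- Let c0, k > 0 and λ > max(1, 1/c0). Define θ(y,z) = exp(λ c0 (y² + k z²)). Then for all (y,z) ∈ ℝ², -(1/2) θ_yy + (c0 y + k z) θ_y - y θ_z = θ(y,z) · ( -λ c0 + 2 λ c0² y² (1 - λ) ), and -1 + θ(y,z) ( λ c0 - 2 λ c0² y² (1 - λ) ) > 0 for all (y,z) ∈ ℝ². -/
open Real

/-- the barrier function `θ(y,z) = exp(λ c0 (y² + k z²))` satisfies
`-(1/2) θ_yy + (c0 y + k z) θ_y - y θ_z = θ · (-λ c0 + 2 λ c0² y² (1 - λ))`,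
and `-1 + θ (λ c0 - 2 λ c0² y² (1 - λ)) > 0` whenever `λ > max 1 (1/c0)`. -/
theorem stmt4 (c0 k l : ℝ) (hc0 : 0 < c0) (hk : 0 < k) (hl : max 1 (1 / c0) < l)
    (θ : ℝ → ℝ → ℝ) (hθ : ∀ y z, θ y z = Real.exp (l * c0 * (y ^ 2 + k * z ^ 2))) :
    (∀ y z : ℝ,
      -(1 / 2) * deriv (fun y' => deriv (fun y'' => θ y'' z) y') y
        + (c0 * y + k * z) * deriv (fun y' => θ y' z) y
        - y * deriv (fun z' => θ y z') z
      = θ y z * (-(l * c0) + 2 * l * c0 ^ 2 * y ^ 2 * (1 - l))) ∧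
    (∀ y z : ℝ,
      0 < -1 + θ y z * (l * c0 - 2 * l * c0 ^ 2 * y ^ 2 * (1 - l))) := by
  have key : ∀ z y : ℝ, HasDerivAt (fun y' => θ y' z) ((2 * l * c0 * y) * θ y z) y := by
    intro z y
    have h1 : HasDerivAt (fun y' : ℝ => l * c0 * (y' ^ 2 + k * z ^ 2))
        (l * c0 * (2 * y)) y := by
      have := ((hasDerivAt_pow 2 y).add_const (k * z ^ 2)).const_mul (l * c0)
      simpa using this
    have h2 := h1.exp
    have heq : (fun y' => θ y' z) = fun y' => Real.exp (l * c0 * (y' ^ 2 + k * z ^ 2)) :=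
      funext fun y' => hθ y' z
    rw [heq, hθ]
    convert h2 using 1
    ring
  have keyz : ∀ y z : ℝ, HasDerivAt (fun z' => θ y z') ((2 * l * c0 * k * z) * θ y z) z := by
    intro y z
    have h1 : HasDerivAt (fun z' : ℝ => l * c0 * (y ^ 2 + k * z' ^ 2))
        (l * c0 * (k * (2 * z))) z := by
      have := (((hasDerivAt_pow 2 z).const_mul k).const_add (y ^ 2)).const_mul (l * c0)
      simpa using this
    have h2 := h1.exp
    have heq : (fun z' => θ y z') = fun z' => Real.exp (l * c0 * (y ^ 2 + k * z' ^ 2)) :=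
      funext fun z' => hθ y z'
    rw [heq, hθ]
    convert h2 using 1
    ring
  have key2 : ∀ z y : ℝ, HasDerivAt (fun y' => deriv (fun y'' => θ y'' z) y')
      (2 * l * c0 * θ y z + (2 * l * c0 * y) * ((2 * l * c0 * y) * θ y z)) y := by
    intro z y
    have heq : (fun y' => deriv (fun y'' => θ y'' z) y')
        = fun y' => (2 * l * c0 * y') * θ y' z :=
      funext fun y' => (key z y').deriv
    rw [heq]
    have hc : HasDerivAt (fun y' : ℝ => 2 * l * c0 * y') (2 * l * c0) y := by
      simpa using (hasDerivAt_id y).const_mul (2 * l * c0)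
    exact hc.mul (key z y)
  constructor
  · intro y z
    rw [(key2 z y).deriv, (key z y).deriv, (keyz y z).deriv]
    ring
  · intro y z
    have hl1 : 1 < l := lt_of_le_of_lt (le_max_left _ _) hl
    have hlc : 1 < l * c0 := by
      have h := lt_of_le_of_lt (le_max_right 1 (1 / c0)) hl
      have := mul_lt_mul_of_pos_right h hc0
      rwa [one_div, inv_mul_cancel₀ hc0.ne'] at this
    have hθ1 : 1 ≤ θ y z := by
      rw [hθ]
      have : (0 : ℝ) ≤ l * c0 * (y ^ 2 + k * z ^ 2) := by positivity
      simpa using Real.one_le_exp this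
    have h2 : (0:ℝ) ≤ 2 * l * c0 ^ 2 * y ^ 2 * (l - 1) := by
      have : (0:ℝ) ≤ l - 1 := by linarith
      positivity
    nlinarith [mul_nonneg (sub_nonneg.2 hθ1) h2,
      mul_nonneg (sub_nonneg.2 hθ1) (le_of_lt (lt_trans one_pos hlc)), h2]
end

section
/- Suppose for each λ > 0, u_λ and v_λ are bounded solutions of λ u + A u = f on D (with respective nonlocal/local boundary conditions), f is symmetric (f(y,z) = f(-y,-z)), and the homogeneous equation λ w + A w = 0 in D, λ w + B₊ w = 0 in D⁺, λ w + B₋ w = 0 in D⁻ with continuous boundary values has solution space spanned by the function 1/λ - v_λ(·,·;1). If ũ_λ := u_λ - v_λ satisfies the homogeneous equations and the jump condition ũ_λ(0⁺,Y) - ũ_λ(0⁻,Y) = v_λ(0⁻,Y;f), then u_λ(y,z;f) = v_λ(y,z;f) + (v_λ(0⁻,Y;f)/v_λ(0⁻,Y;1)) · (1/λ - v_λ(y,z;1)), provided v_λ(0⁻,Y;1) ≠ 0 and v_λ(0⁺,Y;1) = 0. -/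
open Real Set Filter Topology

theorem jump_const_mul_sub {α : Type*} {F G : Filter α} [F.NeBot] [G.NeBot] {g : α → ℝ}
    {C a p q r s : ℝ}
    (hp : Tendsto (fun x => C * (a - g x)) F (𝓝 p))
    (hq : Tendsto (fun x => C * (a - g x)) G (𝓝 q))
    (hr : Tendsto g F (𝓝 r)) (hs : Tendsto g G (𝓝 s)) :
    p - q = C * (s - r) := by
  have hp' : p = C * (a - r) := tendsto_nhds_unique hp ((tendsto_const_nhds.sub hr).const_mul C)
  have hq' : q = C * (a - s) := tendsto_nhds_unique hq ((tendsto_const_nhds.sub hs).const_mul C)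
  rw [hp', hq']
  ring

/-- `Hom` models the bounded solutions of the homogeneous problem with continuous boundary
values; boundary values at `0⁺`/`0⁻` are one-sided limits along the line `z = Y`. -/
theorem stmt10_general (Y l : ℝ)
    (uL vLf v1 : ℝ → ℝ → ℝ)
    (Hom : (ℝ → ℝ → ℝ) → Prop)
    (hspan : ∀ w, Hom w → ∃ C : ℝ, ∀ y z, w y z = C * (1 / l - v1 y z))
    (hhom : Hom fun y z => uL y z - vLf y z)
    (uYp uYm vfYm v1Ym : ℝ)
    (hup : Tendsto (fun y => uL y Y - vLf y Y) (𝓝[>] 0) (𝓝 uYp))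
    (hum : Tendsto (fun y => uL y Y - vLf y Y) (𝓝[<] 0) (𝓝 uYm))
    (hv1m : Tendsto (fun y => v1 y Y) (𝓝[<] 0) (𝓝 v1Ym))
    (hv1p : Tendsto (fun y => v1 y Y) (𝓝[>] 0) (𝓝 0))
    (hjump : uYp - uYm = vfYm)
    (hne : v1Ym ≠ 0) :
    ∀ y z : ℝ, uL y z = vLf y z + (vfYm / v1Ym) * (1 / l - v1 y z) := by
  obtain ⟨C, hC⟩ := hspan _ hhom
  simp only [hC] at hup hum
  have hCv : uYp - uYm = C * (v1Ym - 0) := jump_const_mul_sub hup hum hv1p hv1m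
  have hCeq : C = vfYm / v1Ym := by
    rw [eq_div_iff hne, ← hjump, hCv, sub_zero]
  intro y z
  rw [← hCeq]
  linarith [hC y z]

/-- the key algebraic identity linking the nonlocal resolvent `u_λ`
to the short-cycle resolvent `v_λ`. `Hom` is the set of bounded solutions of the
homogeneous equations `λ w + A w = 0`, `λ w + B₊ w = 0`, `λ w + B₋ w = 0` with
continuous boundary values; it is assumed spanned by `1/λ - v_λ(·,·;1)`.
Boundary values at `0⁺`/`0⁻` are one-sided limits along the lines `z = Y`. -/
theorem stmt10 (Y l : ℝ) (hY : 0 < Y) (hl : 0 < l)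
    (uL vLf v1 : ℝ → ℝ → ℝ)
    (Hom : (ℝ → ℝ → ℝ) → Prop)
    (hspan : ∀ w, Hom w → ∃ C : ℝ, ∀ y z, w y z = C * (1 / l - v1 y z))
    (hhom : Hom fun y z => uL y z - vLf y z)
    (uYp uYm vfYm v1Ym : ℝ)
    (hup : Tendsto (fun y => uL y Y - vLf y Y) (𝓝[>] 0) (𝓝 uYp))
    (hum : Tendsto (fun y => uL y Y - vLf y Y) (𝓝[<] 0) (𝓝 uYm))
    (hvfm : Tendsto (fun y => vLf y Y) (𝓝[<] 0) (𝓝 vfYm))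
    (hv1m : Tendsto (fun y => v1 y Y) (𝓝[<] 0) (𝓝 v1Ym))
    (hv1p : Tendsto (fun y => v1 y Y) (𝓝[>] 0) (𝓝 0))
    (hjump : uYp - uYm = vfYm)
    (hne : v1Ym ≠ 0) :
    ∀ y z : ℝ, uL y z = vLf y z + (vfYm / v1Ym) * (1 / l - v1 y z) :=
  stmt10_general Y l uL vLf v1 Hom hspan hhom uYp uYm vfYm v1Ym hup hum hv1m hv1p hjump hne
end
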